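/- Let n ≥ 1 and consider an elitist (1+1) algorithm on the OneMax function on {0,1}^n whose mutation flips ℓ pairwise different, uniformly chosen bit positions, where ℓ is sampled from a distribution M on {0,1,…,n}; let q = P[ℓ = 1]/n > 0 (the probability of flipping exactly one particular bit and no other). If the algorithm is initialized with the all-zero string, then for every target 1 ≤ k ≤ n, the expected fixed-target time satisfies E[T_k] ≤ (H_n − H_{n−k}) / q. -/

import Mathlib

open MeasureTheory Finset

/-- The OneMax fitness: the number of one-bits of `x`. -/
def oneMax (n : ℕ) (x : Fin n → Bool) : ℕ :=
  (Finset.univ.filter (fun i : Fin n => x i = true)).card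

/-- The `i`-th harmonic number `H_i = ∑_{l=1}^i 1/l`, with `H_0 = 0`. -/
noncomputable def harm (i : ℕ) : ℝ := ∑ j ∈ Finset.range i, 1 / ((j : ℝ) + 1)

/-- Transition probability of an elitist (1+1) algorithm with fitness `f` (to be maximized)
and mutation distribution `q`: from `a`, the offspring `y ~ q a ·` is accepted iff
`f y ≥ f a`; otherwise the algorithm stays at `a`. -/
noncomputable def eaKernel (n : ℕ) (f : (Fin n → Bool) → ℕ)
    (q : (Fin n → Bool) → (Fin n → Bool) → ℝ) (a b : Fin n → Bool) : ℝ :=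
  (if f a ≤ f b then q a b else 0) +
    (if b = a then ∑ y ∈ Finset.univ.filter (fun y => f y < f a), q a y else 0)

/-- Mutation by flipping `ℓ` pairwise different, uniformly chosen bit positions, where `ℓ` is
sampled from a distribution `M` on `{0,…,n}`: the probability that mutating `x` gives `y`. -/
noncomputable def strengthMutProb (n : ℕ) (M : ℕ → ℝ) (x y : Fin n → Bool) : ℝ :=
  M (hammingDist x y) / (n.choose (hammingDist x y) : ℝ)

/-- `x` is a time-homogeneous Markov chain on the finite state space `S` with initial
distribution `init` and transition probabilities `K`, characterized via its
finite-dimensional distributions. -/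
def IsMarkovProcess {Ω S : Type*} [MeasurableSpace Ω] [MeasurableSpace S] [Fintype S]
    (μ : Measure Ω) (x : ℕ → Ω → S) (init : S → ℝ) (K : S → S → ℝ) : Prop :=
  (∀ t, Measurable (x t)) ∧
  (∀ a : S, μ {ω | x 0 ω = a} = ENNReal.ofReal (init a)) ∧
  (∀ t : ℕ, ∀ a : ℕ → S,
    μ {ω | ∀ s ≤ t + 1, x s ω = a s}
      = μ {ω | ∀ s ≤ t, x s ω = a s} * ENNReal.ofReal (K (a t) (a (t + 1))))

/-- First time at which the process `x` reaches a state satisfying `good`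
(`⊤` if this never happens). -/
noncomputable def hitTime {Ω S : Type*} (x : ℕ → Ω → S) (good : S → Prop) (ω : Ω) : ENNReal :=
  sInf {r : ENNReal | ∃ t : ℕ, r = (t : ENNReal) ∧ good (x t ω)}

open scoped ENNReal

/-!
Additive drift. Outside the target, the elitist kernel lowers the expectation of the potential
`g a = (H_{n - min (OM a) k} - H_{n - k}) / q` by at least one per step: the fitness never drops,
so no accepted step raises `g`, and each of the `n - OM a` single-bit flips of a zero bit has
probability `q` and lowers `g` by `1 / ((n - OM a) q)`. Summed over the survival events
`{T > t}` this telescopes to `E[T] = ∑ₜ P[T > t] ≤ g(0ⁿ) = (H_n - H_{n-k}) / q`.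
-/

section Trajectory

variable {Ω S : Type*} {x : ℕ → Ω → S}

def trajectory (x : ℕ → Ω → S) (t : ℕ) (ω : Ω) : Fin (t + 1) → S := fun i => x i ω

def avoidUntil (x : ℕ → Ω → S) (good : S → Prop) (t : ℕ) : Set Ω :=
  {ω | ∀ s ≤ t, ¬ good (x s ω)}

lemma trajectory_preimage_singleton (t : ℕ) (a : ℕ → S) :
    trajectory x t ⁻¹' {fun i : Fin (t + 1) => a i} = {ω | ∀ s ≤ t, x s ω = a s} := by
  ext ω
  simp [trajectory, funext_iff, Fin.forall_iff]

lemma avoidUntil_eq_preimage (good : S → Prop) (t : ℕ) :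
    avoidUntil x good t = trajectory x t ⁻¹' {v | ∀ i, ¬ good (v i)} := by
  ext ω
  simp [avoidUntil, trajectory, Fin.forall_iff]

lemma avoidUntil_inter_preimage_eq (good : S → Prop) (t : ℕ) (c : S) :
    avoidUntil x good t ∩ x t ⁻¹' {c}
      = trajectory x t ⁻¹' {v | (∀ i, ¬ good (v i)) ∧ v (Fin.last t) = c} := by
  rw [avoidUntil_eq_preimage]
  rfl

lemma avoidUntil_succ_subset (good : S → Prop) (t : ℕ) :
    avoidUntil x good (t + 1) ⊆ avoidUntil x good t :=
  fun _ hω s hs => hω s (Nat.le_succ_of_le hs)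

lemma hitTime_le_tsum_indicator (good : S → Prop) (ω : Ω) :
    hitTime x good ω ≤ ∑' t, (avoidUntil x good t).indicator 1 ω := by
  classical
  by_cases hhit : ∃ t, good (x t ω)
  · have havoid : ∀ t < Nat.find hhit, ω ∈ avoidUntil x good t :=
      fun t ht s hs => Nat.find_min hhit (lt_of_le_of_lt hs ht)
    calc hitTime x good ω ≤ (Nat.find hhit : ℝ≥0∞) := sInf_le ⟨_, rfl, Nat.find_spec hhit⟩
      _ = ∑ t ∈ Finset.range (Nat.find hhit), (avoidUntil x good t).indicator 1 ω := by
        rw [Finset.sum_congr rfl fun t ht =>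
          Set.indicator_of_mem (havoid t (Finset.mem_range.1 ht)) 1]
        simp
      _ ≤ _ := ENNReal.sum_le_tsum _
  · push Not at hhit
    have havoid : ∀ t, ω ∈ avoidUntil x good t := fun t s _ => hhit s
    simp [Set.indicator_of_mem (havoid _)]

variable [MeasurableSpace Ω] [MeasurableSpace S] [Fintype S] [MeasurableSingletonClass S]

lemma measurableSet_trajectory_preimage (hx : ∀ t, Measurable (x t)) (t : ℕ)
    (P : Set (Fin (t + 1) → S)) : MeasurableSet (trajectory x t ⁻¹' P) :=
  (measurable_pi_lambda (trajectory x t) fun i => hx i) (.of_discrete)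

lemma measurableSet_avoidUntil (hx : ∀ t, Measurable (x t)) (good : S → Prop) (t : ℕ) :
    MeasurableSet (avoidUntil x good t) := by
  rw [avoidUntil_eq_preimage]
  exact measurableSet_trajectory_preimage hx t _

lemma lintegral_comp_eq_sum (ν : Measure Ω) {f : Ω → S} (hf : Measurable f) (h : S → ℝ≥0∞) :
    ∫⁻ ω, h (f ω) ∂ν = ∑ c, h c * ν (f ⁻¹' {c}) := by
  rw [← lintegral_map .of_discrete hf, lintegral_fintype]
  simp_rw [Measure.map_apply hf (measurableSet_singleton _)]

lemma setLIntegral_eq_sum_inter_preimage (ν : Measure Ω) {f : Ω → S} (hf : Measurable f)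
    {A : Set Ω} (hA : MeasurableSet A) (F : Ω → ℝ≥0∞) :
    ∫⁻ ω in A, F ω ∂ν = ∑ c, ∫⁻ ω in A ∩ f ⁻¹' {c}, F ω ∂ν := by
  have hdisj : Pairwise (Function.onFun Disjoint fun c => A ∩ f ⁻¹' {c}) := fun c c' hne =>
    Set.disjoint_left.2 fun ω h h' => hne (h.2.symm.trans h'.2)
  have hcover : A = ⋃ c, A ∩ f ⁻¹' {c} := by
    ext ω
    simp
  conv_lhs => rw [hcover]
  rw [lintegral_iUnion (fun c => hA.inter (hf .of_discrete)) hdisj, tsum_fintype]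

end Trajectory

section MarkovDrift

variable {Ω S : Type*} [MeasurableSpace Ω] [MeasurableSpace S] [Fintype S] {μ : Measure Ω}
  {x : ℕ → Ω → S} {init : S → ℝ} {K : S → S → ℝ}

namespace IsMarkovProcess

lemma measure_trajectory_inter (hchain : IsMarkovProcess μ x init K) (t : ℕ)
    (v : Fin (t + 1) → S) (b : S) :
    μ (trajectory x t ⁻¹' {v} ∩ x (t + 1) ⁻¹' {b})
      = μ (trajectory x t ⁻¹' {v}) * ENNReal.ofReal (K (v (Fin.last t)) b) := by
  set a : ℕ → S := fun s => if h : s < t + 1 then v ⟨s, h⟩ else b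
  have hv : (fun i : Fin (t + 1) => a i) = v := funext fun i => dif_pos i.isLt
  have hsucc : {ω | ∀ s ≤ t + 1, x s ω = a s}
      = {ω | ∀ s ≤ t, x s ω = a s} ∩ x (t + 1) ⁻¹' {b} := by
    ext ω
    simp [Nat.le_succ_iff, or_imp, forall_and, a]
  rw [← hv, trajectory_preimage_singleton, ← hsucc, hchain.2.2 t a]
  simp [a, Fin.last]

variable [MeasurableSingletonClass S]

lemma measure_trajectory_preimage_inter (hchain : IsMarkovProcess μ x init K) {t : ℕ}
    {P : Set (Fin (t + 1) → S)} {c : S} (hP : ∀ v ∈ P, v (Fin.last t) = c) (b : S) :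
    μ (trajectory x t ⁻¹' P ∩ x (t + 1) ⁻¹' {b})
      = μ (trajectory x t ⁻¹' P) * ENNReal.ofReal (K c b) := by
  classical
  have hmeas := measurableSet_trajectory_preimage hchain.1 t
  have hfibres : ∀ ν : Measure Ω, ν (trajectory x t ⁻¹' P)
      = ∑ v ∈ P.toFinset, ν (trajectory x t ⁻¹' {v}) := fun ν => by
    rw [sum_measure_preimage_singleton _ fun v _ => hmeas _, Set.coe_toFinset]
  calc μ (trajectory x t ⁻¹' P ∩ x (t + 1) ⁻¹' {b})
      = ∑ v ∈ P.toFinset, μ.restrict (x (t + 1) ⁻¹' {b}) (trajectory x t ⁻¹' {v}) := by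
        rw [← hfibres, Measure.restrict_apply (hmeas P)]
    _ = ∑ v ∈ P.toFinset, μ (trajectory x t ⁻¹' {v}) * ENNReal.ofReal (K c b) := by
        refine Finset.sum_congr rfl fun v hv => ?_
        rw [Measure.restrict_apply (hmeas _), measure_trajectory_inter hchain,
          hP v (Set.mem_toFinset.1 hv)]
    _ = μ (trajectory x t ⁻¹' P) * ENNReal.ofReal (K c b) := by
        rw [← Finset.sum_mul, ← hfibres]

lemma setLIntegral_comp_succ (hchain : IsMarkovProcess μ x init K) {t : ℕ}
    {P : Set (Fin (t + 1) → S)} {c : S} (hP : ∀ v ∈ P, v (Fin.last t) = c) (h : S → ℝ≥0∞) :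
    ∫⁻ ω in trajectory x t ⁻¹' P, h (x (t + 1) ω) ∂μ
      = μ (trajectory x t ⁻¹' P) * ∑ b, ENNReal.ofReal (K c b) * h b := by
  rw [lintegral_comp_eq_sum _ (hchain.1 (t + 1)), Finset.mul_sum]
  refine Finset.sum_congr rfl fun b _ => ?_
  rw [Measure.restrict_apply (hchain.1 (t + 1) .of_discrete), Set.inter_comm,
    measure_trajectory_preimage_inter hchain hP]
  ring

section Drift

variable {good : S → Prop} {g : S → ℝ≥0∞}

lemma drift_step (hchain : IsMarkovProcess μ x init K)
    (hdrift : ∀ a, ¬ good a → 1 + ∑ b, ENNReal.ofReal (K a b) * g b ≤ g a) (t : ℕ) :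
    μ (avoidUntil x good t) + ∫⁻ ω in avoidUntil x good (t + 1), g (x (t + 1) ω) ∂μ
      ≤ ∫⁻ ω in avoidUntil x good t, g (x t ω) ∂μ := by
  set B : S → Set Ω := fun c => avoidUntil x good t ∩ x t ⁻¹' {c}
  have hmeas := measurableSet_avoidUntil hchain.1 good t
  have hBmeas : ∀ c, MeasurableSet (B c) := fun c => hmeas.inter (hchain.1 t .of_discrete)
  have hsplit : ∀ F : Ω → ℝ≥0∞,
      ∫⁻ ω in avoidUntil x good t, F ω ∂μ = ∑ c, ∫⁻ ω in B c, F ω ∂μ :=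
    setLIntegral_eq_sum_inter_preimage μ (hchain.1 t) hmeas
  have hnow : ∀ c, ∫⁻ ω in B c, g (x t ω) ∂μ = μ (B c) * g c := fun c => by
    rw [setLIntegral_congr_fun (hBmeas c) fun ω hω => by rw [hω.2], setLIntegral_const,
      mul_comm]
  have hnext : ∀ c, ∫⁻ ω in B c, (1 + g (x (t + 1) ω)) ∂μ
      = μ (B c) * (1 + ∑ b, ENNReal.ofReal (K c b) * g b) := fun c => by
    rw [lintegral_add_left measurable_const, setLIntegral_one, mul_add, mul_one]
    simp only [B, avoidUntil_inter_preimage_eq]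
    rw [setLIntegral_comp_succ hchain fun v hv => hv.2]
  calc μ (avoidUntil x good t) + ∫⁻ ω in avoidUntil x good (t + 1), g (x (t + 1) ω) ∂μ
      ≤ μ (avoidUntil x good t) + ∫⁻ ω in avoidUntil x good t, g (x (t + 1) ω) ∂μ := by
        gcongr
        exact avoidUntil_succ_subset good t
    _ = ∑ c, μ (B c) * (1 + ∑ b, ENNReal.ofReal (K c b) * g b) := by
        rw [← setLIntegral_one, ← lintegral_add_left measurable_const, hsplit]
        exact Finset.sum_congr rfl fun c _ => hnext c
    _ ≤ ∑ c, μ (B c) * g c := by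
        refine Finset.sum_le_sum fun c _ => ?_
        by_cases hc : good c
        · have hB : B c = ∅ :=
            Set.eq_empty_of_forall_notMem fun ω hω => hω.1 t le_rfl (hω.2 ▸ hc)
          simp [hB]
        · gcongr
          exact hdrift c hc
    _ = ∫⁻ ω in avoidUntil x good t, g (x t ω) ∂μ := by
        rw [hsplit]
        exact Finset.sum_congr rfl fun c _ => (hnow c).symm

lemma sum_measure_avoidUntil_le (hchain : IsMarkovProcess μ x init K)
    (hdrift : ∀ a, ¬ good a → 1 + ∑ b, ENNReal.ofReal (K a b) * g b ≤ g a) (N : ℕ) :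
    ∑ t ∈ Finset.range N, μ (avoidUntil x good t) ≤ ∫⁻ ω, g (x 0 ω) ∂μ := by
  have htelescope : ∀ N, ∑ t ∈ Finset.range N, μ (avoidUntil x good t)
      + ∫⁻ ω in avoidUntil x good N, g (x N ω) ∂μ
      ≤ ∫⁻ ω in avoidUntil x good 0, g (x 0 ω) ∂μ := by
    intro N
    induction N with
    | zero => simp
    | succ N ih =>
      calc _ = ∑ t ∈ Finset.range N, μ (avoidUntil x good t) + (μ (avoidUntil x good N)
            + ∫⁻ ω in avoidUntil x good (N + 1), g (x (N + 1) ω) ∂μ) := by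
            rw [Finset.sum_range_succ, add_assoc]
        _ ≤ _ := (add_le_add le_rfl (drift_step hchain hdrift N)).trans ih
  exact le_self_add.trans (htelescope N) |>.trans (setLIntegral_le_lintegral _ _)

theorem lintegral_hitTime_le (hchain : IsMarkovProcess μ x init K)
    (hdrift : ∀ a, ¬ good a → 1 + ∑ b, ENNReal.ofReal (K a b) * g b ≤ g a) :
    ∫⁻ ω, hitTime x good ω ∂μ ≤ ∫⁻ ω, g (x 0 ω) ∂μ := by
  have hmeas := measurableSet_avoidUntil hchain.1 good
  calc ∫⁻ ω, hitTime x good ω ∂μ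
      ≤ ∫⁻ ω, ∑' t, (avoidUntil x good t).indicator 1 ω ∂μ :=
        lintegral_mono (hitTime_le_tsum_indicator good)
    _ = ∑' t, μ (avoidUntil x good t) := by
        rw [lintegral_tsum fun t => (measurable_one.indicator (hmeas t)).aemeasurable]
        simp_rw [lintegral_indicator_one (hmeas _)]
    _ ≤ ∫⁻ ω, g (x 0 ω) ∂μ :=
        ENNReal.tsum_le_of_sum_range_le (sum_measure_avoidUntil_le hchain hdrift)

end Drift

theorem lintegral_hitTime_le_of_real (hchain : IsMarkovProcess μ x init K) {good : S → Prop}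
    (hK : ∀ a b, 0 ≤ K a b) {g : S → ℝ} (hg : ∀ a, 0 ≤ g a)
    (hdrift : ∀ a, ¬ good a → 1 + ∑ b, K a b * g b ≤ g a) :
    ∫⁻ ω, hitTime x good ω ∂μ ≤ ∫⁻ ω, ENNReal.ofReal (g (x 0 ω)) ∂μ := by
  refine lintegral_hitTime_le (g := fun a => ENNReal.ofReal (g a)) hchain fun a ha => ?_
  have hterm : ∀ b ∈ Finset.univ, 0 ≤ K a b * g b := fun b _ => mul_nonneg (hK a b) (hg b)
  calc 1 + ∑ b, ENNReal.ofReal (K a b) * ENNReal.ofReal (g b)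
      = ENNReal.ofReal (1 + ∑ b, K a b * g b) := by
        rw [ENNReal.ofReal_add zero_le_one (Finset.sum_nonneg hterm), ENNReal.ofReal_one,
          ENNReal.ofReal_sum_of_nonneg hterm]
        simp_rw [ENNReal.ofReal_mul (hK a _)]
    _ ≤ ENNReal.ofReal (g a) := ENNReal.ofReal_le_ofReal (hdrift a ha)

lemma lintegral_comp_zero (hchain : IsMarkovProcess μ x init K) (g : S → ℝ≥0∞) :
    ∫⁻ ω, g (x 0 ω) ∂μ = ∑ c, g c * ENNReal.ofReal (init c) := by
  simp_rw [lintegral_comp_eq_sum μ (hchain.1 0), ← hchain.2.1]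
  rfl

end IsMarkovProcess

end MarkovDrift

section Mutation

lemma card_filter_hammingDist_eq {ι : Type*} [Fintype ι] [DecidableEq ι] (x : ι → Bool) (j : ℕ) :
    #{y | hammingDist x y = j} = (Fintype.card ι).choose j := by
  set flip : Finset ι → ι → Bool := fun s i => if i ∈ s then !x i else x i
  have hflip : ∀ s, ({i | x i ≠ flip s i} : Finset ι) = s := fun s => by
    ext i
    by_cases h : i ∈ s <;> simp [flip, h]
  rw [← Finset.card_univ, ← Finset.card_powersetCard]
  refine Finset.card_nbij' (fun y => ({i | x i ≠ y i} : Finset ι)) flip ?_ ?_ ?_ ?_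
  · intro y hy
    simpa [hammingDist] using hy
  · intro s hs
    simpa [hammingDist, hflip] using hs
  · intro y _
    funext i
    cases hx : x i <;> cases hy : y i <;> simp [flip, hx, hy]
  · exact fun s _ => hflip s

variable {n : ℕ} {M : ℕ → ℝ}

lemma strengthMutProb_nonneg (hM : ∀ i, 0 ≤ M i) (x y : Fin n → Bool) :
    0 ≤ strengthMutProb n M x y :=
  div_nonneg (hM _) (Nat.cast_nonneg _)

lemma sum_strengthMutProb (hMsum : ∑ i ∈ Finset.range (n + 1), M i = 1) (x : Fin n → Bool) :
    ∑ y, strengthMutProb n M x y = 1 := by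
  have hdist : ∀ y ∈ (Finset.univ : Finset (Fin n → Bool)), hammingDist x y ∈ Finset.range (n + 1) :=
    fun y _ => Finset.mem_range_succ_iff.2
      (hammingDist_le_card_fintype.trans_eq (Fintype.card_fin n))
  unfold strengthMutProb
  rw [← Finset.sum_fiberwise_of_maps_to' hdist fun j => M j / (n.choose j : ℝ), ← hMsum]
  refine Finset.sum_congr rfl fun j hj => ?_
  have hchoose : (n.choose j : ℝ) ≠ 0 := by
    exact_mod_cast (Nat.choose_pos (Finset.mem_range_succ_iff.1 hj)).ne'
  rw [Finset.sum_const, card_filter_hammingDist_eq, Fintype.card_fin, nsmul_eq_mul,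
    mul_div_cancel₀ _ hchoose]

lemma strengthMutProb_of_hammingDist_eq_one {x y : Fin n → Bool} (h : hammingDist x y = 1) :
    strengthMutProb n M x y = M 1 / n := by
  rw [strengthMutProb, h, Nat.choose_one_right]

end Mutation

section ElitistKernel

variable {n : ℕ} {f : (Fin n → Bool) → ℕ} {q : (Fin n → Bool) → (Fin n → Bool) → ℝ}
  {a b : Fin n → Bool}

lemma eaKernel_nonneg (hq : ∀ a b, 0 ≤ q a b) (a b : Fin n → Bool) : 0 ≤ eaKernel n f q a b := by
  unfold eaKernel
  have := hq a b
  have : 0 ≤ ∑ y with f y < f a, q a y := Finset.sum_nonneg fun y _ => hq a y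
  positivity

lemma sum_eaKernel (hq : ∑ b, q a b = 1) : ∑ b, eaKernel n f q a b = 1 := by
  simp only [eaKernel, Finset.sum_add_distrib, Finset.sum_ite_eq', Finset.mem_univ, if_true,
    ← Finset.sum_filter]
  rw [← hq, ← Finset.sum_filter_add_sum_filter_not Finset.univ (fun b => f a ≤ f b)]
  simp only [not_le]

lemma eaKernel_of_lt (h : f b < f a) : eaKernel n f q a b = 0 := by
  have hne : b ≠ a := by rintro rfl; exact lt_irrefl _ h
  simp [eaKernel, h.not_ge, hne]

lemma eaKernel_of_gt (h : f a < f b) : eaKernel n f q a b = q a b := by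
  have hne : b ≠ a := by rintro rfl; exact lt_irrefl _ h
  simp [eaKernel, h.le, hne]

end ElitistKernel

lemma harm_succ (m : ℕ) : harm (m + 1) = harm m + 1 / ((m : ℝ) + 1) :=
  Finset.sum_range_succ _ m

lemma harm_mono : Monotone harm :=
  monotone_nat_of_le_succ fun m => by
    rw [harm_succ]
    exact le_add_of_nonneg_right (by positivity)

section OneMax

variable {n k : ℕ} {a : Fin n → Bool}

lemma oneMax_update_true {j : Fin n} (hj : a j = false) :
    oneMax n (Function.update a j true) = oneMax n a + 1 := by
  have hins : ({i | Function.update a j true i = true} : Finset (Fin n))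
      = insert j ({i | a i = true} : Finset (Fin n)) := by
    ext i
    by_cases h : i = j <;> simp [Function.update_apply, h]
  rw [oneMax, hins, Finset.card_insert_of_notMem (by simp [hj]), oneMax]

lemma hammingDist_update_true {j : Fin n} (hj : a j = false) :
    hammingDist a (Function.update a j true) = 1 := by
  have hsingle : ({i | a i ≠ Function.update a j true i} : Finset (Fin n)) = {j} := by
    ext i
    by_cases h : i = j <;> simp [Function.update_apply, h, hj]
  rw [hammingDist, hsingle, Finset.card_singleton]

lemma card_filter_eq_false_add_oneMax (a : Fin n → Bool) :
    #{j | a j = false} + oneMax n a = n := by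
  have hsplit := Finset.card_filter_add_card_filter_not (s := Finset.univ) (fun i => a i = true)
  simp only [Bool.not_eq_true, Finset.card_univ, Fintype.card_fin] at hsplit
  rw [oneMax, add_comm, hsplit]

noncomputable def oneMaxPotential (n k : ℕ) (q : ℝ) (a : Fin n → Bool) : ℝ :=
  (harm (n - min (oneMax n a) k) - harm (n - k)) / q

variable {q : ℝ}

lemma oneMaxPotential_nonneg (hq : 0 ≤ q) (a : Fin n → Bool) : 0 ≤ oneMaxPotential n k q a :=
  div_nonneg (sub_nonneg.2 (harm_mono (Nat.sub_le_sub_left (min_le_right _ _) n))) hq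

lemma oneMaxPotential_le_of_oneMax_le (hq : 0 ≤ q) {b : Fin n → Bool}
    (h : oneMax n a ≤ oneMax n b) :
    oneMaxPotential n k q b ≤ oneMaxPotential n k q a :=
  div_le_div_of_nonneg_right
    (sub_le_sub_right (harm_mono (Nat.sub_le_sub_left (min_le_min_right k h) n)) _) hq

lemma oneMaxPotential_sub_of_succ (hkn : k ≤ n) (ha : oneMax n a < k) {b : Fin n → Bool}
    (hb : oneMax n b = oneMax n a + 1) :
    oneMaxPotential n k q a - oneMaxPotential n k q b = 1 / (((n : ℝ) - oneMax n a) * q) := by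
  have hlevel : n - oneMax n a = n - (oneMax n a + 1) + 1 := by omega
  have hcast : ((n - (oneMax n a + 1) : ℕ) : ℝ) + 1 = n - oneMax n a := by
    rw [Nat.cast_sub (by omega)]
    push_cast
    ring
  rw [oneMaxPotential, oneMaxPotential, min_eq_left ha.le, hb, min_eq_left ha, hlevel, harm_succ,
    hcast, ← sub_div, sub_sub_sub_cancel_right, add_sub_cancel_left, div_div]

lemma oneMaxPotential_zero :
    oneMaxPotential n k q (fun _ => false) = (harm n - harm (n - k)) / q := by
  simp [oneMaxPotential, oneMax]

end OneMax

section OneMaxDrift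

variable {n k : ℕ} {M : ℕ → ℝ} {a : Fin n → Bool}

lemma eaKernel_mul_sub_oneMaxPotential_nonneg (hM : ∀ i, 0 ≤ M i) (hq : 0 ≤ M 1 / (n : ℝ))
    (b : Fin n → Bool) :
    0 ≤ eaKernel n (oneMax n) (strengthMutProb n M) a b
      * (oneMaxPotential n k (M 1 / n) a - oneMaxPotential n k (M 1 / n) b) := by
  rcases le_or_gt (oneMax n a) (oneMax n b) with hab | hab
  · exact mul_nonneg (eaKernel_nonneg (strengthMutProb_nonneg hM) a b)
      (sub_nonneg.2 (oneMaxPotential_le_of_oneMax_le hq hab))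
  · simp [eaKernel_of_lt hab]

lemma eaKernel_update_mul_sub_oneMaxPotential (hq : 0 < M 1 / (n : ℝ)) (hkn : k ≤ n)
    (ha : oneMax n a < k) {j : Fin n} (hj : a j = false) :
    eaKernel n (oneMax n) (strengthMutProb n M) a (Function.update a j true)
        * (oneMaxPotential n k (M 1 / n) a
          - oneMaxPotential n k (M 1 / n) (Function.update a j true))
      = 1 / (n - oneMax n a) := by
  rw [eaKernel_of_gt (by simp [oneMax_update_true hj]),
    strengthMutProb_of_hammingDist_eq_one (hammingDist_update_true hj),
    oneMaxPotential_sub_of_succ hkn ha (oneMax_update_true hj), mul_one_div,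
    div_mul_cancel_right₀ hq.ne', one_div]

theorem oneMax_drift (hM : ∀ i, 0 ≤ M i) (hMsum : ∑ i ∈ Finset.range (n + 1), M i = 1)
    (hq : 0 < M 1 / (n : ℝ)) (hkn : k ≤ n) (ha : oneMax n a < k) :
    1 + ∑ b, eaKernel n (oneMax n) (strengthMutProb n M) a b
        * oneMaxPotential n k (M 1 / n) b
      ≤ oneMaxPotential n k (M 1 / n) a := by
  set K := eaKernel n (oneMax n) (strengthMutProb n M)
  set g := oneMaxPotential n k (M 1 / n)
  set Z : Finset (Fin n) := {j | a j = false}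
  set up : Fin n → Fin n → Bool := fun j => Function.update a j true
  have hZ : (#Z : ℝ) = n - oneMax n a :=
    eq_sub_of_add_eq (by exact_mod_cast card_filter_eq_false_add_oneMax a)
  have hgap : (0 : ℝ) < n - oneMax n a := sub_pos.2 (by exact_mod_cast ha.trans_le hkn)
  have hinj : Set.InjOn up Z := fun j hj j' _ h => by
    by_contra hne
    have := congrFun h j
    simp [up, Function.update_of_ne hne, (Finset.mem_filter.1 hj).2] at this
  have hdrop : 1 ≤ ∑ b, K a b * (g a - g b) :=
    calc (1 : ℝ) = ∑ j ∈ Z, K a (up j) * (g a - g (up j)) := by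
          rw [Finset.sum_congr rfl fun j hj => eaKernel_update_mul_sub_oneMaxPotential hq hkn ha
            (Finset.mem_filter.1 hj).2, Finset.sum_const, nsmul_eq_mul, hZ,
            mul_one_div_cancel hgap.ne']
      _ = ∑ b ∈ Z.image up, K a b * (g a - g b) :=
          (Finset.sum_image (f := fun b => K a b * (g a - g b)) hinj).symm
      _ ≤ ∑ b, K a b * (g a - g b) :=
          Finset.sum_le_sum_of_subset_of_nonneg (Finset.subset_univ _) fun b _ _ =>
            eaKernel_mul_sub_oneMaxPotential_nonneg hM hq.le b
  have hrow : ∑ b, K a b = 1 := sum_eaKernel (sum_strengthMutProb hMsum a)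
  simp only [mul_sub, Finset.sum_sub_distrib, ← Finset.sum_mul, hrow, one_mul] at hdrop
  linarith

end OneMaxDrift

theorem elitist_oneMax_fixed_target_upper_zero_init_general
    (n : ℕ)
    (M : ℕ → ℝ) (hMnonneg : ∀ i, 0 ≤ M i)
    (hMsum : ∑ i ∈ Finset.range (n + 1), M i = 1)
    (hq : 0 < M 1 / (n : ℝ))
    {Ω : Type*} [MeasurableSpace Ω] (μ : Measure Ω)
    (x : ℕ → Ω → Fin n → Bool)
    (hchain : IsMarkovProcess μ x
      (fun a => if a = (fun _ => false) then 1 else 0)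
      (eaKernel n (oneMax n) (strengthMutProb n M)))
    (k : ℕ) (hkn : k ≤ n) :
    ∫⁻ ω, hitTime x (fun y => k ≤ oneMax n y) ω ∂μ
      ≤ ENNReal.ofReal ((harm n - harm (n - k)) / (M 1 / (n : ℝ))) := by
  calc ∫⁻ ω, hitTime x (fun y => k ≤ oneMax n y) ω ∂μ
      ≤ ∫⁻ ω, ENNReal.ofReal (oneMaxPotential n k (M 1 / n) (x 0 ω)) ∂μ :=
        hchain.lintegral_hitTime_le_of_real (eaKernel_nonneg (strengthMutProb_nonneg hMnonneg))
          (oneMaxPotential_nonneg hq.le) fun a ha =>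
            oneMax_drift hMnonneg hMsum hq hkn (not_le.1 ha)
    _ = ENNReal.ofReal (oneMaxPotential n k (M 1 / n) (fun _ => false)) := by
        rw [hchain.lintegral_comp_zero fun a => ENNReal.ofReal (oneMaxPotential n k (M 1 / n) a)]
        simp only [apply_ite ENNReal.ofReal, ENNReal.ofReal_one, ENNReal.ofReal_zero, mul_ite,
          mul_one, mul_zero, Finset.sum_ite_eq', Finset.mem_univ, if_true]
    _ = ENNReal.ofReal ((harm n - harm (n - k)) / (M 1 / (n : ℝ))) := by
        rw [oneMaxPotential_zero]

/-- Fixed-target upper bound on OneMax for an elitist (1+1) algorithm with mutation-strength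
distribution `M`, initialized with the all-zero string: with `q = P[ℓ=1]/n > 0`, for every
target `1 ≤ k ≤ n`, `E[T_k] ≤ (H_n − H_{n−k}) / q`. -/
theorem elitist_oneMax_fixed_target_upper_zero_init
    (n : ℕ) (hn : 1 ≤ n)
    (M : ℕ → ℝ) (hMnonneg : ∀ i, 0 ≤ M i)
    (hMsum : ∑ i ∈ Finset.range (n + 1), M i = 1)
    (hMsupp : ∀ i, n < i → M i = 0)
    (hq : 0 < M 1 / (n : ℝ))
    {Ω : Type*} [MeasurableSpace Ω] (μ : Measure Ω) [IsProbabilityMeasure μ]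
    (x : ℕ → Ω → Fin n → Bool)
    (hchain : IsMarkovProcess μ x
      (fun a => if a = (fun _ => false) then 1 else 0)
      (eaKernel n (oneMax n) (strengthMutProb n M)))
    (k : ℕ) (hk1 : 1 ≤ k) (hkn : k ≤ n) :
    ∫⁻ ω, hitTime x (fun y => k ≤ oneMax n y) ω ∂μ
      ≤ ENNReal.ofReal ((harm n - harm (n - k)) / (M 1 / (n : ℝ))) :=
  elitist_oneMax_fixed_target_upper_zero_init_general n M hMnonneg hMsum hq μ x hchain k hkn
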